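/- Let J ≥ 0 be an integer and let α be a real number with 0 < α < π. Then the (2J+1)×(2J+1) real symmetric prolate matrix P(α) has 2J+1 pairwise distinct eigenvalues; that is, its spectrum is simple: if v and w are nonzero real eigenvectors of P(α) with P(α)v = σv and P(α)w = σw for the same eigenvalue σ, then v and w are linearly dependent. -/

import Mathlib

/-- The prolate matrix entry `p_{mn}(α)`: `α/π` for `m = n` and
`sin((m−n)α)/(π(m−n))` for `m ≠ n`. -/
noncomputable def prolateR (α : ℝ) (m n : ℤ) : ℝ :=
  if m = n then α / Real.pi
  else Real.sin (((m - n : ℤ) : ℝ) * α) / (Real.pi * ((m - n : ℤ) : ℝ))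

/-- The `(2J+1) × (2J+1)` prolate matrix `P(α)` indexed by `m, n ∈ {−J, …, J}`. -/
noncomputable def prolateMatrix (α : ℝ) (J : ℕ) :
    Matrix (Fin (2 * J + 1)) (Fin (2 * J + 1)) ℝ :=
  Matrix.of fun i j => prolateR α (((i : ℕ) : ℤ) - (J : ℤ)) (((j : ℕ) : ℤ) - (J : ℤ))

/-!
For an eigenvector `u` of `P(α)` put `F(θ) = Σ u_m e^{imθ}`. Since `2π P(a)` is the Gram matrix
of the exponentials on `[-a, a]` and `P(π) = 1`, the eigen-equation says
`∫_{-α}^{α} F ḡ = σ ∫_{-π}^{π} F ḡ` for every trigonometric polynomial `g` with frequencies in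
`[-J, J]`. If moreover `u_J = 0`, this applies to `g = F` and to `g = e^{iθ} F`, so `|F|²` and
`|F|² cos θ` put the same fraction `σ` of their integral over `[-π, π]` on `[-α, α]`. As
`cos θ - cos α` changes sign exactly at `|θ| = α`, this forces `|F|²` to vanish on an interval;
`F` is real analytic, so `F = 0` and `u = 0`. Thus no eigenvector has vanishing last coordinate,
which an eigenspace of dimension at least two would contain.
-/

open Complex intervalIntegral Set
open scoped Real

lemma prolateR_comm (α : ℝ) (m n : ℤ) : prolateR α m n = prolateR α n m := by
  rcases eq_or_ne m n with rfl | hmn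
  · rfl
  · have h : ((n - m : ℤ) : ℝ) = -((m - n : ℤ) : ℝ) := by push_cast; ring
    rw [prolateR, prolateR, if_neg hmn, if_neg hmn.symm, h, neg_mul, Real.sin_neg, mul_neg,
      neg_div_neg_eq]

lemma integral_cexp_intCast_sub_mul_I (a : ℝ) (m n : ℤ) :
    ∫ θ in (-a)..a, cexp ((m - n : ℤ) * θ * I) = 2 * π * prolateR a m n := by
  rcases eq_or_ne m n with rfl | hmn
  · have hπ : (π : ℂ) ≠ 0 := ofReal_ne_zero.mpr Real.pi_ne_zero
    simp only [sub_self, Int.cast_zero, zero_mul, exp_zero, integral_const, sub_neg_eq_add,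
      real_smul, ofReal_add, mul_one, prolateR, if_pos, ofReal_div]
    field_simp
    ring
  · have hk : ((m - n : ℤ) : ℝ) ≠ 0 := Int.cast_ne_zero.mpr (sub_ne_zero.mpr hmn)
    have hkI : ((m - n : ℤ) : ℂ) * I ≠ 0 := mul_ne_zero (by exact_mod_cast hk) I_ne_zero
    have hint := integral_exp_mul_complex (a := -a) (b := a) hkI
    simp only [show ∀ θ : ℝ, ((m - n : ℤ) : ℂ) * θ * I = ((m - n : ℤ) : ℂ) * I * θ from
      fun θ => by ring, hint]
    have e : ∀ x : ℝ, ((m - n : ℤ) : ℂ) * I * (x : ℂ) = (((m - n : ℤ) : ℝ) * x : ℝ) * I := by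
      intro x; push_cast; ring
    rw [e, e, exp_mul_I, exp_mul_I, prolateR, if_neg hmn]
    push_cast
    rw [mul_neg, cos_neg, sin_neg]
    field_simp
    ring

lemma prolateMatrix_pi (J : ℕ) : prolateMatrix π J = 1 := by
  ext i j
  rcases eq_or_ne i j with rfl | hij
  · simp [prolateMatrix, prolateR, Real.pi_ne_zero]
  · have hmn : ((i : ℕ) : ℤ) - J ≠ ((j : ℕ) : ℤ) - J := fun h => hij (by omega)
    simp only [prolateMatrix, Matrix.of_apply, Matrix.one_apply_ne hij, prolateR, if_neg hmn,
      Real.sin_int_mul_pi, zero_div]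

section TrigPoly

variable {J : ℕ}

def freq (J : ℕ) (i : Fin (2 * J + 1)) : ℤ := (i : ℤ) - J

noncomputable def trigPoly (u : Fin (2 * J + 1) → ℝ) (θ : ℝ) : ℂ :=
  ∑ i, (u i : ℂ) * cexp (freq J i * θ * I)

lemma analyticAt_cexp_intCast_mul_I (k : ℤ) (x : ℝ) :
    AnalyticAt ℝ (fun θ : ℝ => cexp (k * θ * I)) x := by
  have hlin : AnalyticAt ℝ (fun θ : ℝ => (k * θ * I : ℂ)) x := by
    convert ((k * I : ℂ) • ofRealCLM).analyticAt x using 1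
    ext θ
    simp only [FunLike.coe_smul, Pi.smul_apply, ofRealCLM_apply, smul_eq_mul]
    ring
  exact (analyticAt_cexp.restrictScalars (𝕜 := ℝ)).comp hlin

@[fun_prop]
lemma continuous_trigPoly (u : Fin (2 * J + 1) → ℝ) : Continuous (trigPoly u) := by
  unfold trigPoly
  fun_prop

lemma analyticOnNhd_trigPoly (u : Fin (2 * J + 1) → ℝ) : AnalyticOnNhd ℝ (trigPoly u) univ :=
  fun x _ => by
    unfold trigPoly
    have := Finset.analyticAt_sum (𝕜 := ℝ) Finset.univ
      (f := fun i (θ : ℝ) => (u i : ℂ) * cexp (freq J i * θ * I))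
      fun i _ => by exact analyticAt_const.mul (analyticAt_cexp_intCast_mul_I (freq J i) x)
    rwa [Finset.sum_fn] at this

lemma starRingEnd_cexp_intCast_mul_I (k : ℤ) (θ : ℝ) :
    starRingEnd ℂ (cexp (k * θ * I)) = cexp (-k * θ * I) := by
  rw [← exp_conj]
  simp only [map_mul, map_intCast, conj_ofReal, conj_I]
  ring_nf

lemma integral_trigPoly_mul_cexp (a : ℝ) (u : Fin (2 * J + 1) → ℝ) (j : Fin (2 * J + 1)) :
    ∫ θ in (-a)..a, trigPoly u θ * cexp (-freq J j * θ * I)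
      = 2 * π * ((prolateMatrix a J).mulVec u j : ℝ) := by
  have hexpand : ∀ θ : ℝ, trigPoly u θ * cexp (-freq J j * θ * I)
      = ∑ i, (u i : ℂ) * cexp ((freq J i - freq J j : ℤ) * θ * I) := fun θ => by
    rw [trigPoly, Finset.sum_mul]
    refine Finset.sum_congr rfl fun i _ => ?_
    rw [mul_assoc, ← exp_add]
    push_cast
    ring_nf
  simp_rw [hexpand]
  rw [integral_finsetSum (f := fun i θ => (u i : ℂ) * cexp ((freq J i - freq J j : ℤ) * θ * I))
    fun i _ => Continuous.intervalIntegrable (by fun_prop) _ _]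
  simp_rw [integral_const_mul, integral_cexp_intCast_sub_mul_I, Matrix.mulVec, dotProduct,
    prolateMatrix, Matrix.of_apply]
  push_cast
  rw [Finset.mul_sum]
  refine Finset.sum_congr rfl fun i _ => ?_
  rw [prolateR_comm]
  simp only [freq]
  ring

lemma integral_mul_conj_trigPoly {f : ℝ → ℂ} (hf : Continuous f) (a : ℝ)
    (c : Fin (2 * J + 1) → ℝ) :
    ∫ θ in (-a)..a, f θ * starRingEnd ℂ (trigPoly c θ)
      = ∑ j, (c j : ℂ) * ∫ θ in (-a)..a, f θ * cexp (-freq J j * θ * I) := by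
  have hexpand : ∀ θ : ℝ, f θ * starRingEnd ℂ (trigPoly c θ)
      = ∑ j, (c j : ℂ) * (f θ * cexp (-freq J j * θ * I)) := fun θ => by
    simp only [trigPoly, map_sum, map_mul, conj_ofReal, starRingEnd_cexp_intCast_mul_I,
      Finset.mul_sum]
    exact Finset.sum_congr rfl fun j _ => by ring
  simp_rw [hexpand]
  rw [integral_finsetSum (f := fun j θ => (c j : ℂ) * (f θ * cexp (-freq J j * θ * I)))
    fun j _ => Continuous.intervalIntegrable (by fun_prop) _ _]
  simp_rw [integral_const_mul]

lemma trigPoly_eq_zero_of_eqOn_Ioo {u : Fin (2 * J + 1) → ℝ} {a b : ℝ} (hab : a < b)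
    (h : EqOn (trigPoly u) 0 (Ioo a b)) : u = 0 := by
  have hzero : trigPoly u = 0 := by
    funext θ
    refine (analyticOnNhd_trigPoly u).eqOn_zero_of_preconnected_of_eventuallyEq_zero
      isPreconnected_univ (mem_univ ((a + b) / 2)) ?_ (mem_univ θ)
    filter_upwards [Ioo_mem_nhds (by linarith : a < (a + b) / 2)
      (by linarith : (a + b) / 2 < b)] with x hx using h hx
  funext j
  have hcoeff := integral_trigPoly_mul_cexp π u j
  rw [prolateMatrix_pi, Matrix.one_mulVec] at hcoeff
  simp only [hzero, Pi.zero_apply, zero_mul, intervalIntegral.integral_zero] at hcoeff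
  have hπ : (2 * π : ℂ) ≠ 0 := by exact_mod_cast (by positivity : (2 * π : ℝ) ≠ 0)
  exact_mod_cast (mul_eq_zero.mp hcoeff.symm).resolve_left hπ

end TrigPoly

section Concentration

variable {J : ℕ} {α σ : ℝ} {u : Fin (2 * J + 1) → ℝ}

lemma integral_mul_conj_trigPoly_of_mulVec_eq_smul
    (hu : (prolateMatrix α J).mulVec u = σ • u) (c : Fin (2 * J + 1) → ℝ) :
    ∫ θ in (-α)..α, trigPoly u θ * starRingEnd ℂ (trigPoly c θ)
      = σ * ∫ θ in (-π)..π, trigPoly u θ * starRingEnd ℂ (trigPoly c θ) := by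
  rw [integral_mul_conj_trigPoly (continuous_trigPoly u),
    integral_mul_conj_trigPoly (continuous_trigPoly u), Finset.mul_sum]
  refine Finset.sum_congr rfl fun j _ => ?_
  rw [integral_trigPoly_mul_cexp, integral_trigPoly_mul_cexp, hu, prolateMatrix_pi,
    Matrix.one_mulVec, Pi.smul_apply, smul_eq_mul]
  push_cast
  ring

lemma integral_normSq_trigPoly_of_mulVec_eq_smul (hu : (prolateMatrix α J).mulVec u = σ • u) :
    ∫ θ in (-α)..α, normSq (trigPoly u θ) = σ * ∫ θ in (-π)..π, normSq (trigPoly u θ) := by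
  have h := integral_mul_conj_trigPoly_of_mulVec_eq_smul hu u
  simp_rw [mul_conj, integral_ofReal] at h
  exact_mod_cast h

lemma cexp_mul_I_mul_trigPoly (hlast : u (Fin.last (2 * J)) = 0) (θ : ℝ) :
    cexp (θ * I) * trigPoly u θ = trigPoly (Fin.cons 0 fun j : Fin (2 * J) => u j.castSucc) θ := by
  rw [trigPoly, trigPoly, Fin.sum_univ_castSucc, Fin.sum_univ_succ, hlast]
  simp only [Fin.cons_zero, Fin.cons_succ, ofReal_zero, zero_mul, add_zero, zero_add]
  rw [Finset.mul_sum]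
  refine Finset.sum_congr rfl fun j _ => ?_
  rw [mul_left_comm, ← exp_add]
  simp only [freq, Fin.val_castSucc, Fin.val_succ]
  push_cast
  ring_nf

lemma integral_normSq_mul_cos_trigPoly_of_mulVec_eq_smul
    (hu : (prolateMatrix α J).mulVec u = σ • u) (hlast : u (Fin.last (2 * J)) = 0) :
    ∫ θ in (-α)..α, normSq (trigPoly u θ) * Real.cos θ
      = σ * ∫ θ in (-π)..π, normSq (trigPoly u θ) * Real.cos θ := by
  set c : Fin (2 * J + 1) → ℝ := Fin.cons 0 fun j : Fin (2 * J) => u j.castSucc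
  have hre : ∀ a : ℝ, ∫ θ in (-a)..a, normSq (trigPoly u θ) * Real.cos θ
      = (∫ θ in (-a)..a, trigPoly u θ * starRingEnd ℂ (trigPoly c θ)).re := by
    intro a
    rw [← reCLM_apply, ← ContinuousLinearMap.intervalIntegral_comp_comm _
      (Continuous.intervalIntegrable (by fun_prop) _ _)]
    refine integral_congr fun θ _ => ?_
    rw [reCLM_apply, ← cexp_mul_I_mul_trigPoly hlast, map_mul, mul_left_comm, mul_conj,
      ← exp_conj]
    simp only [map_mul, conj_ofReal, conj_I]
    rw [show (θ : ℂ) * -I = ((-θ : ℝ) : ℂ) * I by push_cast; ring, re_mul_ofReal,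
      exp_ofReal_mul_I_re, Real.cos_neg, mul_comm]
  rw [hre, hre, integral_mul_conj_trigPoly_of_mulVec_eq_smul hu, re_ofReal_mul]

end Concentration

lemma integral_mul_pos_of_not_eqOn_zero {H w : ℝ → ℝ} {a b : ℝ} (hab : a < b)
    (hH : Continuous H) (hw : Continuous w) (hH0 : ∀ x, 0 ≤ H x) (hw0 : ∀ x ∈ Ioo a b, 0 < w x)
    (hne : ¬EqOn H 0 (Ioo a b)) : 0 < ∫ x in a..b, H x * w x := by
  obtain ⟨x, hx, hHx⟩ : ∃ x ∈ Ioo a b, H x ≠ 0 := by simpa [EqOn, and_assoc] using hne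
  have hnonneg : 0 ≤ᵐ[MeasureTheory.volume.restrict (uIoc a b)] fun x => H x * w x := by
    rw [Filter.EventuallyLE, uIoc_of_le hab.le]
    refine MeasureTheory.ae_restrict_of_ae_eq_of_ae_restrict MeasureTheory.Ioo_ae_eq_Ioc ?_
    rw [MeasureTheory.ae_restrict_iff' measurableSet_Ioo]
    filter_upwards with y hy using mul_nonneg (hH0 y) (hw0 y hy).le
  rw [integral_pos_iff_support_of_nonneg_ae' hnonneg ((hH.mul hw).intervalIntegrable _ _)]
  refine ⟨hab, ?_⟩
  have hopen : IsOpen ((Function.support fun x => H x * w x) ∩ Ioo a b) :=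
    (hH.mul hw).isOpen_support.inter isOpen_Ioo
  exact (hopen.measure_pos _ ⟨x, mul_ne_zero hHx (hw0 x hx).ne', hx⟩).trans_le
    (MeasureTheory.measure_mono (inter_subset_inter_right _ Ioo_subset_Ioc_self))

lemma Real.cos_lt_cos_of_abs_lt {x y : ℝ} (hy : |y| ≤ π) (hxy : |x| < |y|) :
    Real.cos y < Real.cos x := by
  rw [← Real.cos_abs x, ← Real.cos_abs y]
  exact Real.cos_lt_cos_of_nonneg_of_le_pi (abs_nonneg x) hy hxy

lemma integral_eq_add_add_of_continuous {f : ℝ → ℝ} (hf : Continuous f) (a b c d : ℝ) :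
    ∫ x in a..d, f x = (∫ x in a..b, f x) + (∫ x in b..c, f x) + ∫ x in c..d, f x := by
  rw [integral_add_adjacent_intervals (hf.intervalIntegrable _ _) (hf.intervalIntegrable _ _),
    integral_add_adjacent_intervals (hf.intervalIntegrable _ _) (hf.intervalIntegrable _ _)]

/-- If a nonnegative `H` had no zero interval, `(1 - σ) ∫_{|θ|<α} H = σ ∫_{|θ|>α} H` would
force `0 < σ < 1`, while the same identity for `H (cos θ - cos α)`, which changes sign at
`|θ| = α`, would force `σ ∉ [0, 1]`. -/
lemma exists_eqOn_Ioo_zero_of_integral_eq_mul {H : ℝ → ℝ} {α σ : ℝ} (hH : Continuous H)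
    (hH0 : ∀ θ, 0 ≤ H θ) (hα : 0 < α) (hαπ : α < π)
    (hmass : ∫ θ in (-α)..α, H θ = σ * ∫ θ in (-π)..π, H θ)
    (hcos : ∫ θ in (-α)..α, H θ * Real.cos θ = σ * ∫ θ in (-π)..π, H θ * Real.cos θ) :
    ∃ a b, a < b ∧ EqOn H 0 (Ioo a b) := by
  by_contra! hne
  set k := Real.cos α
  have hcosH : Continuous fun θ => H θ * Real.cos θ := by fun_prop
  have hpos : ∀ {a b : ℝ} (s : ℝ), a < b → (∀ θ ∈ Ioo a b, 0 < s * (Real.cos θ - k)) →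
      0 < s * ((∫ θ in a..b, H θ * Real.cos θ) - k * ∫ θ in a..b, H θ) := by
    intro a b s hab hw
    have h := integral_mul_pos_of_not_eqOn_zero hab hH (by fun_prop) hH0 hw (hne a b hab)
    simp_rw [show ∀ θ, H θ * (s * (Real.cos θ - k)) = s * (H θ * Real.cos θ - k * H θ) from
      fun θ => by ring] at h
    rwa [intervalIntegral.integral_const_mul, integral_sub (hcosH.intervalIntegrable _ _)
      ((hH.intervalIntegrable _ _).const_mul k), intervalIntegral.integral_const_mul] at h
  have hone : ∀ {a b : ℝ}, a < b → 0 < ∫ θ in a..b, H θ := fun hab => by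
    simpa using integral_mul_pos_of_not_eqOn_zero hab hH continuous_const hH0
      (fun _ _ => one_pos) (hne _ _ hab)
  have hαπ' : |α| ≤ π := by rw [abs_of_pos hα]; exact hαπ.le
  have hCL := hpos (a := -π) (b := -α) (-1) (by linarith) fun θ hθ => by
    have : |α| < |θ| := by rw [abs_of_pos hα, abs_of_neg (by linarith [hθ.2])]; linarith [hθ.2]
    nlinarith [Real.cos_lt_cos_of_abs_lt (abs_le.mpr ⟨by linarith [hθ.1], by linarith [hθ.2]⟩) this]
  have hCM := hpos (a := -α) (b := α) 1 (by linarith) fun θ hθ => by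
    have : |θ| < |α| := by rw [abs_of_pos hα]; exact abs_lt.mpr hθ
    nlinarith [Real.cos_lt_cos_of_abs_lt hαπ' this]
  have hCR := hpos (-1) hαπ fun θ hθ => by
    have : |α| < |θ| := by rw [abs_of_pos hα, abs_of_pos (by linarith [hθ.1])]; exact hθ.1
    nlinarith [Real.cos_lt_cos_of_abs_lt (abs_le.mpr ⟨by linarith [hθ.1], hθ.2.le⟩) this]
  rw [integral_eq_add_add_of_continuous hH (-π) (-α) α π] at hmass
  rw [integral_eq_add_add_of_continuous hcosH (-π) (-α) α π] at hcos
  have hAL := hone (by linarith : -π < -α)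
  have hAM := hone (by linarith : -α < α)
  have hAR := hone hαπ
  set AL := ∫ θ in (-π)..(-α), H θ
  set AM := ∫ θ in (-α)..α, H θ
  set AR := ∫ θ in α..π, H θ
  set CL := ∫ θ in (-π)..(-α), H θ * Real.cos θ
  set CM := ∫ θ in (-α)..α, H θ * Real.cos θ
  set CR := ∫ θ in α..π, H θ * Real.cos θ
  have hbalance : (AL + AR) * (CM - k * AM) + AM * ((k * AL - CL) + (k * AR - CR)) = 0 := by
    linear_combination (AL + AM + AR) * hcos - (CL + CM + CR) * hmass
  nlinarith [mul_pos (add_pos hAL hAR) (by linarith : 0 < CM - k * AM),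
    mul_pos hAM (by linarith : 0 < (k * AL - CL) + (k * AR - CR))]

lemma eq_zero_of_mulVec_eq_smul_of_last_eq_zero {J : ℕ} {α σ : ℝ} (hα : 0 < α) (hαπ : α < π)
    {u : Fin (2 * J + 1) → ℝ} (hu : (prolateMatrix α J).mulVec u = σ • u)
    (hlast : u (Fin.last (2 * J)) = 0) : u = 0 := by
  obtain ⟨a, b, hab, hzero⟩ := exists_eqOn_Ioo_zero_of_integral_eq_mul (by fun_prop)
    (fun θ => normSq_nonneg _) hα hαπ (integral_normSq_trigPoly_of_mulVec_eq_smul hu)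
    (integral_normSq_mul_cos_trigPoly_of_mulVec_eq_smul hu hlast)
  exact trigPoly_eq_zero_of_eqOn_Ioo hab fun θ hθ => normSq_eq_zero.mp (hzero hθ)

lemma Submodule.exists_eq_smul_of_disjoint_ker {K V : Type*} [Field K] [AddCommGroup V]
    [Module K V] {p : Submodule K V} {ℓ : V →ₗ[K] K} (hp : Disjoint p (LinearMap.ker ℓ))
    {v w : V} (hv : v ∈ p) (hw : w ∈ p) (hv0 : v ≠ 0) : ∃ t : K, w = t • v := by
  have hℓv : ℓ v ≠ 0 := fun h => hv0 (Submodule.disjoint_def.mp hp v hv h)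
  refine ⟨ℓ w / ℓ v, sub_eq_zero.mp
    (Submodule.disjoint_def.mp hp _ (p.sub_mem hw (p.smul_mem _ hv)) ?_)⟩
  simp [hℓv]

lemma disjoint_eigenspace_prolateMatrix_ker_last {J : ℕ} {α : ℝ} (hα : 0 < α) (hαπ : α < π)
    (σ : ℝ) : Disjoint (Module.End.eigenspace (Matrix.toLin' (prolateMatrix α J)) σ)
      (LinearMap.ker (LinearMap.proj (R := ℝ) (φ := fun _ => ℝ) (Fin.last (2 * J)))) :=
  Submodule.disjoint_def.mpr fun u hu hlast =>
    eq_zero_of_mulVec_eq_smul_of_last_eq_zero hα hαπ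
      (by simpa using Module.End.mem_eigenspace_iff.mp hu) hlast

theorem stmt_14_general (J : ℕ) (α : ℝ) (h1 : 0 < α) (h2 : α < Real.pi) (σ : ℝ)
    (v w : Fin (2 * J + 1) → ℝ) (hv0 : v ≠ 0)
    (hv : (prolateMatrix α J).mulVec v = σ • v)
    (hw : (prolateMatrix α J).mulVec w = σ • w) :
    ∃ t : ℝ, w = t • v :=
  Submodule.exists_eq_smul_of_disjoint_ker (disjoint_eigenspace_prolateMatrix_ker_last h1 h2 σ)
    (Module.End.mem_eigenspace_iff.mpr (by simpa using hv))
    (Module.End.mem_eigenspace_iff.mpr (by simpa using hw)) hv0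

/-- For `0 < α < π` the prolate matrix `P(α)` has simple spectrum:
any two nonzero eigenvectors for the same eigenvalue are linearly dependent. -/
theorem stmt_14 (J : ℕ) (α : ℝ) (h1 : 0 < α) (h2 : α < Real.pi) (σ : ℝ)
    (v w : Fin (2 * J + 1) → ℝ) (hv0 : v ≠ 0) (hw0 : w ≠ 0)
    (hv : (prolateMatrix α J).mulVec v = σ • v)
    (hw : (prolateMatrix α J).mulVec w = σ • w) :
    ∃ t : ℝ, w = t • v :=
  stmt_14_general J α h1 h2 σ v w hv0 hv hw
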